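/- arXiv:2112.05020 — 4 statements merged into one kernel-verified Lean document; each statement's English description precedes it below -/
import Mathlib

section
/- Let $A_1 \in \mathbb{R}^{n\times n}$ be symmetric positive definite, $A_2 \in \mathbb{R}^{m\times m}$ symmetric positive semi-definite, $B \in \mathbb{R}^{m\times n}$, and suppose $S_1 = A_2 + B A_1^{-1} B^T$ is positive definite. Then every eigenvalue $\mu$ of the generalized eigenproblem $\begin{pmatrix} A_1 & B^T \\ B & -A_2 \end{pmatrix} x = \mu \begin{pmatrix} A_1 & 0 \\ 0 & S_1 \end{pmatrix} x$ satisfies $\mu \in [-1, \tfrac{1}{2}(1-\sqrt{5})] \cup [1, \tfrac{1}{2}(1+\sqrt{5})]$. -/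
/-!
Write `x = (u, v)`. The first block row says `Bᵀ v = (μ - 1) A₁ u`, hence
`B A₁⁻¹ Bᵀ v = (μ - 1) B u`; testing the second block row against `v` turns this into
`(1 + μ - μ²) t = (μ² - 1) a` with `t = vᵀ B A₁⁻¹ Bᵀ v ≥ 0` and `a = vᵀ A₂ v ≥ 0`.
If `v ≠ 0` then `a + t = vᵀ S₁ v > 0`, so `1 + μ - μ²` and `μ² - 1` cannot have opposite
signs, which confines `μ` to the two intervals. If `v = 0` the first row forces `μ = 1`.
-/

open Matrix

lemma mul_nonneg_of_mul_eq_mul {f g a t : ℝ} (ha : 0 ≤ a) (ht : 0 ≤ t) (hat : 0 < a + t)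
    (h : f * t = g * a) : 0 ≤ f * g := by
  rcases ha.eq_or_lt with rfl | ha
  · simp_all [(by linarith : t ≠ 0)]
  rcases ht.eq_or_lt with rfl | ht
  · simp_all [ha.ne']
  have : f * g * (a * t) = (g * a) ^ 2 := by linear_combination (g * a) * h
  exact nonneg_of_mul_nonneg_left (this ▸ sq_nonneg _) (by positivity)

lemma mem_Icc_union_Icc_of_nonneg {μ : ℝ} (h : 0 ≤ (1 + μ - μ ^ 2) * (μ ^ 2 - 1)) :
    μ ∈ Set.Icc (-1 : ℝ) ((1 - √5) / 2) ∪ Set.Icc 1 ((1 + √5) / 2) := by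
  have h5 : √5 ^ 2 = 5 := Real.sq_sqrt (by norm_num)
  have hgolden : 1 + μ - μ ^ 2 = -((μ - (1 - √5) / 2) * (μ - (1 + √5) / 2)) := by
    linear_combination (-1 / 4) * h5
  have hs : 1 < √5 ∧ √5 < 3 :=
    ⟨by nlinarith [Real.sqrt_nonneg 5], by nlinarith [Real.sqrt_nonneg 5]⟩
  rw [hgolden] at h
  rcases le_or_gt 1 μ with h1 | h1
  · refine Or.inr ⟨h1, not_lt.1 fun hμ => ?_⟩
    nlinarith [mul_pos (mul_pos (by linarith : 0 < μ - (1 - √5) / 2)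
      (by linarith : 0 < μ - (1 + √5) / 2)) (by nlinarith : 0 < μ ^ 2 - 1)]
  · refine Or.inl ⟨not_lt.1 fun hμ => ?_, not_lt.1 fun hμ => ?_⟩
    · nlinarith [mul_pos (mul_pos_of_neg_of_neg (by linarith : μ - (1 - √5) / 2 < 0)
        (by linarith : μ - (1 + √5) / 2 < 0)) (by nlinarith : 0 < μ ^ 2 - 1)]
    · nlinarith [mul_pos (mul_pos (by linarith : 0 < μ - (1 - √5) / 2)
        (by linarith : 0 < (1 + √5) / 2 - μ)) (by nlinarith : 0 < 1 - μ ^ 2)]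

section SaddlePoint

variable {ι κ : Type*} [Fintype ι] [Fintype κ] {A : Matrix ι ι ℝ} {C D : Matrix κ κ ℝ}
  {B : Matrix κ ι ℝ} {μ : ℝ}

lemma fromBlocks_mulVec_eq_smul_iff (x : ι ⊕ κ → ℝ) :
    fromBlocks A Bᵀ B C *ᵥ x = μ • fromBlocks A 0 0 D *ᵥ x ↔
      A *ᵥ (x ∘ Sum.inl) + Bᵀ *ᵥ (x ∘ Sum.inr) = μ • A *ᵥ (x ∘ Sum.inl) ∧
        B *ᵥ (x ∘ Sum.inl) + C *ᵥ (x ∘ Sum.inr) = μ • D *ᵥ (x ∘ Sum.inr) := by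
  simp [fromBlocks_mulVec, funext_iff]

variable [DecidableEq ι] {u : ι → ℝ} {v : κ → ℝ}

lemma schur_relation_of_eigen (hA : IsUnit A)
    (h₁ : A *ᵥ u + Bᵀ *ᵥ v = μ • A *ᵥ u)
    (h₂ : B *ᵥ u + -C *ᵥ v = μ • (C + B * A⁻¹ * Bᵀ) *ᵥ v) :
    (1 + μ - μ ^ 2) * (v ⬝ᵥ (B * A⁻¹ * Bᵀ) *ᵥ v) = (μ ^ 2 - 1) * (v ⬝ᵥ C *ᵥ v) := by
  have hBv : Bᵀ *ᵥ v = (μ - 1) • A *ᵥ u := by rw [sub_smul, one_smul, ← h₁]; abel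
  have hSv : (B * A⁻¹ * Bᵀ) *ᵥ v = (μ - 1) • B *ᵥ u := by
    rw [← mulVec_mulVec, hBv, mulVec_smul, mulVec_mulVec,
      nonsing_inv_mul_cancel_right _ _ ((isUnit_iff_isUnit_det A).1 hA)]
  have ht : v ⬝ᵥ (B * A⁻¹ * Bᵀ) *ᵥ v = (μ - 1) * (v ⬝ᵥ B *ᵥ u) := by
    rw [hSv, dotProduct_smul, smul_eq_mul]
  have h₂' := congrArg (v ⬝ᵥ ·) h₂
  simp only [neg_mulVec, add_mulVec, dotProduct_add, dotProduct_neg, dotProduct_smul,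
    smul_eq_mul] at h₂'
  linear_combination ht + (μ - 1) * h₂'

end SaddlePoint

theorem stmt0 {n m : ℕ}
    (A1 : Matrix (Fin n) (Fin n) ℝ) (A2 : Matrix (Fin m) (Fin m) ℝ)
    (B : Matrix (Fin m) (Fin n) ℝ)
    (hA1 : A1.PosDef) (hA2 : A2.PosSemidef)
    (hS1 : (A2 + B * A1⁻¹ * Bᵀ).PosDef)
    (μ : ℝ) (x : Fin n ⊕ Fin m → ℝ) (hx : x ≠ 0)
    (heig : (Matrix.fromBlocks A1 Bᵀ B (-A2)).mulVec x
      = μ • (Matrix.fromBlocks A1 0 0 (A2 + B * A1⁻¹ * Bᵀ)).mulVec x) :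
    μ ∈ Set.Icc (-1 : ℝ) ((1 - Real.sqrt 5)/2) ∪ Set.Icc (1 : ℝ) ((1 + Real.sqrt 5)/2) := by
  obtain ⟨h₁, h₂⟩ := (fromBlocks_mulVec_eq_smul_iff x).1 heig
  by_cases hv : x ∘ Sum.inr = 0
  · have hu : x ∘ Sum.inl ≠ 0 := fun hu => hx <| by
      rw [← Sum.elim_comp_inl_inr x, hu, hv, Sum.elim_zero_zero]
    have hAu : A1 *ᵥ (x ∘ Sum.inl) ≠ 0 :=
      ((mulVec_injective_iff_isUnit.2 hA1.isUnit).ne_iff' (mulVec_zero _)).2 hu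
    rw [hv, mulVec_zero, add_zero] at h₁
    obtain rfl : μ = 1 := smul_left_injective ℝ hAu (by simpa using h₁.symm)
    exact Or.inr ⟨le_rfl, by linarith [Real.one_le_sqrt.2 (by norm_num : (1 : ℝ) ≤ 5)]⟩
  · apply mem_Icc_union_Icc_of_nonneg
    refine mul_nonneg_of_mul_eq_mul (hA2.dotProduct_mulVec_nonneg _) ?_ ?_
      (schur_relation_of_eigen hA1.isUnit h₁ h₂)
    · simpa using (hA1.inv.posSemidef.mul_mul_conjTranspose_same B).dotProduct_mulVec_nonneg _
    · simpa [add_mulVec, Function.comp_def] using hS1.dotProduct_mulVec_pos hv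
end

section
/- Let $A_1$, $A_2$, $B_1$, $B_2$ be real matrices with $A_1$ symmetric positive definite, $A_2$ symmetric positive semi-definite, $S_1 = A_2 + B_1 A_1^{-1} B_1^T$ positive definite, and $S_2 = B_2 S_1^{-1} B_2^T$ positive definite. Then every eigenvalue $\mu$ of $\mathcal{P}_D^{-1} \mathcal{A}_0$, where $\mathcal{A}_0 = \begin{pmatrix} A_1 & B_1^T & 0 \\ B_1 & -A_2 & B_2^T \\ 0 & B_2 & 0 \end{pmatrix}$ and $\mathcal{P}_D = \mathrm{diag}(A_1, S_1, S_2)$, satisfies $\mu \in [-\tfrac{1}{2}(1+\sqrt{5}), 2\cos(5\pi/7)] \cup [-1, \tfrac{1}{2}(1-\sqrt{5})] \cup [2\cos(3\pi/7), \tfrac{1}{2}(\sqrt{5}-1)] \cup [1, 2\cos(\pi/7)]$. -/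
/-!
Test the block equations against `x₁`, `x₂`, `x₃`. Write `t = x₁ᵀA₁x₁`, `β = x₂ᵀA₂x₂`,
`s = x₂ᵀS₁x₂`, `g = x₃ᵀS₂x₃` and `δ = (B₁x₁)ᵀS₁⁻¹(B₁x₁)`; for `μ ≠ 1`, `x₂ = 0` would force
`x = 0`, so `s > 0`. The first block row says
`B₁ᵀx₂ = (μ - 1)A₁x₁`, so `S₁x₂ = A₂x₂ + (μ - 1)B₁x₁` and the second row becomes
`μB₁x₁ = (μ + 1)S₁x₂ - B₂ᵀx₃`. This gives `s = β + (μ - 1)²t`, `μ(μ - 1)t + μg = (μ + 1)s` and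
`μ²δ = (μ + 1)²s - 2μ(μ + 1)g + g`, and Cauchy–Schwarz for the inner products of `A₁` and `S₁`
adds `δ ≤ t` (as `B₁A₁⁻¹B₁ᵀ ≤ S₁`) and `μ²g ≤ s`. Eliminating `t`, `β`, `g`, `δ` according to the
signs of `μ`, `μ - 1`, `μ + 1` forces `μ² - μ - 1 ≥ 0` for `μ < 0`, `μ² + μ - 1 ≤ 0` for `μ < 1`,
and `μ³ - μ² - 2μ + 1 ≤ 0` for `μ > 1` and for `μ < -1` or `0 < μ < 1`. The roots of this cubic
are `2 cos (kπ/7)`, `k = 1, 3, 5`, because `cos 4θ = -cos 3θ` at these angles.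
-/

open Matrix Real Set

namespace Matrix

variable {ι κ : Type*} [Fintype ι] [Fintype κ]

lemma IsSymm.mulVec_dotProduct {M : Matrix ι ι ℝ} (hM : M.IsSymm) (u v : ι → ℝ) :
    M *ᵥ u ⬝ᵥ v = u ⬝ᵥ M *ᵥ v := by
  rw [dotProduct_mulVec, ← mulVec_transpose, hM.eq]

lemma dotProduct_mul_mul_transpose_mulVec (B : Matrix κ ι ℝ) (M : Matrix ι ι ℝ) (x : κ → ℝ) :
    x ⬝ᵥ (B * M * Bᵀ) *ᵥ x = Bᵀ *ᵥ x ⬝ᵥ M *ᵥ (Bᵀ *ᵥ x) := by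
  rw [← mulVec_mulVec, ← mulVec_mulVec, dotProduct_mulVec, ← mulVec_transpose]

lemma PosSemidef.sq_dotProduct_mulVec_le {M : Matrix ι ι ℝ} (hM : M.PosSemidef) (x y : ι → ℝ) :
    (x ⬝ᵥ M *ᵥ y) ^ 2 ≤ (x ⬝ᵥ M *ᵥ x) * (y ⬝ᵥ M *ᵥ y) := by
  have hsymm : y ⬝ᵥ M *ᵥ x = x ⬝ᵥ M *ᵥ y := by
    rw [← IsSymm.mulVec_dotProduct (isHermitian_iff_isSymm.mp hM.isHermitian),
      dotProduct_comm]
  have hquad : ∀ c : ℝ, 0 ≤ (y ⬝ᵥ M *ᵥ y) * (c * c) + 2 * (x ⬝ᵥ M *ᵥ y) * c + x ⬝ᵥ M *ᵥ x := by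
    intro c
    have := hM.dotProduct_mulVec_nonneg (x + c • y)
    simp only [star_trivial, mulVec_add, mulVec_smul, dotProduct_add, add_dotProduct,
      dotProduct_smul, smul_dotProduct, smul_eq_mul, hsymm] at this
    linarith
  have := discrim_le_zero hquad
  rw [discrim] at this
  linarith

variable [DecidableEq ι]

lemma PosDef.sq_dotProduct_le {M : Matrix ι ι ℝ} (hM : M.PosDef) (x y : ι → ℝ) :
    (x ⬝ᵥ y) ^ 2 ≤ (x ⬝ᵥ M *ᵥ x) * (y ⬝ᵥ M⁻¹ *ᵥ y) := by
  have hMM : M *ᵥ (M⁻¹ *ᵥ y) = y := by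
    rw [mulVec_mulVec, mul_nonsing_inv _ hM.det_pos.ne'.isUnit, one_mulVec]
  simpa [hMM, dotProduct_comm y] using hM.posSemidef.sq_dotProduct_mulVec_le x (M⁻¹ *ᵥ y)

lemma PosDef.dotProduct_inv_mulVec_le_of_posSemidef_sub [DecidableEq κ] {A : Matrix ι ι ℝ}
    {S : Matrix κ κ ℝ} {B : Matrix κ ι ℝ} (hA : A.PosDef) (hS : S.PosDef)
    (hSB : (S - B * A⁻¹ * Bᵀ).PosSemidef) (x : ι → ℝ) :
    B *ᵥ x ⬝ᵥ S⁻¹ *ᵥ (B *ᵥ x) ≤ x ⬝ᵥ A *ᵥ x := by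
  set u := S⁻¹ *ᵥ (B *ᵥ x)
  have hδ_nonneg : 0 ≤ B *ᵥ x ⬝ᵥ u := by
    simpa only [star_trivial] using hS.inv.posSemidef.dotProduct_mulVec_nonneg (B *ᵥ x)
  have hδ : B *ᵥ x ⬝ᵥ u = x ⬝ᵥ Bᵀ *ᵥ u := by rw [dotProduct_mulVec x, vecMul_transpose]
  have hSu : u ⬝ᵥ S *ᵥ u = B *ᵥ x ⬝ᵥ u := by
    rw [mulVec_mulVec, mul_nonsing_inv _ hS.det_pos.ne'.isUnit, one_mulVec,
      dotProduct_comm]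
  have hBu : Bᵀ *ᵥ u ⬝ᵥ A⁻¹ *ᵥ (Bᵀ *ᵥ u) ≤ u ⬝ᵥ S *ᵥ u := by
    have := hSB.dotProduct_mulVec_nonneg u
    rw [star_trivial, sub_mulVec, dotProduct_sub, dotProduct_mul_mul_transpose_mulVec] at this
    linarith
  have hcs := hA.sq_dotProduct_le x (Bᵀ *ᵥ u)
  rw [← hδ] at hcs
  have ht : 0 ≤ x ⬝ᵥ A *ᵥ x := by
    simpa only [star_trivial] using hA.posSemidef.dotProduct_mulVec_nonneg x
  nlinarith [mul_le_mul_of_nonneg_left (hBu.trans hSu.le) ht]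

lemma IsSymm.dotProduct_inv_mulVec_smul_mulVec_sub {S : Matrix ι ι ℝ} (hS : S.IsSymm)
    (hdet : IsUnit S.det) (a : ℝ) (u v : ι → ℝ) :
    (a • S *ᵥ u - v) ⬝ᵥ S⁻¹ *ᵥ (a • S *ᵥ u - v)
      = a ^ 2 * (u ⬝ᵥ S *ᵥ u) - 2 * a * (u ⬝ᵥ v) + v ⬝ᵥ S⁻¹ *ᵥ v := by
  have hinv : S⁻¹ *ᵥ (S *ᵥ u) = u := by rw [mulVec_mulVec, nonsing_inv_mul _ hdet, one_mulVec]
  have hcross : S *ᵥ u ⬝ᵥ S⁻¹ *ᵥ v = u ⬝ᵥ v := by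
    rw [hS.mulVec_dotProduct, mulVec_mulVec, mul_nonsing_inv _ hdet, one_mulVec]
  simp only [mulVec_sub, mulVec_smul, hinv, sub_dotProduct, dotProduct_sub, smul_dotProduct,
    dotProduct_smul, smul_eq_mul, hcross]
  rw [dotProduct_comm v u, dotProduct_comm (S *ᵥ u) u]
  ring

lemma PosDef.sq_mul_dotProduct_le_of_mulVec_eq {S : Matrix ι ι ℝ} (hS : S.PosDef)
    {B : Matrix κ ι ℝ} {x : ι → ℝ} {y : κ → ℝ} {μ : ℝ} (h : B *ᵥ x = μ • (B * S⁻¹ * Bᵀ) *ᵥ y) :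
    μ ^ 2 * (y ⬝ᵥ (B * S⁻¹ * Bᵀ) *ᵥ y) ≤ x ⬝ᵥ S *ᵥ x := by
  set g := y ⬝ᵥ (B * S⁻¹ * Bᵀ) *ᵥ y with hg_def
  have hxy : x ⬝ᵥ Bᵀ *ᵥ y = μ * g := by
    rw [dotProduct_mulVec, vecMul_transpose, h, smul_dotProduct, smul_eq_mul, dotProduct_comm]
  have hcs := hS.sq_dotProduct_le x (Bᵀ *ᵥ y)
  rw [hxy, ← dotProduct_mul_mul_transpose_mulVec] at hcs
  have hg : 0 ≤ g := by
    rw [hg_def, dotProduct_mul_mul_transpose_mulVec]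
    simpa only [star_trivial] using hS.inv.posSemidef.dotProduct_mulVec_nonneg (Bᵀ *ᵥ y)
  rcases hg.eq_or_lt with hg0 | hgpos
  · rw [← hg0, mul_zero]
    simpa only [star_trivial] using hS.posSemidef.dotProduct_mulVec_nonneg x
  · exact le_of_mul_le_mul_right (by linarith) hgpos

end Matrix

lemma cubic_two_cos_odd_mul_pi_div_seven_eq_zero {k : ℕ} (hk : Odd k) (hk7 : k < 7) :
    (2 * cos (k * π / 7)) ^ 3 - (2 * cos (k * π / 7)) ^ 2 - 2 * (2 * cos (k * π / 7)) + 1 = 0 := by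
  set θ := k * π / 7
  have hk0 : (0 : ℝ) < k := by exact_mod_cast hk.pos
  have hk7' : (k : ℝ) < 7 := by exact_mod_cast hk7
  have h43 : cos (4 * θ) = -cos (3 * θ) := by
    rw [show 4 * θ = k * π - 3 * θ by ring, cos_nat_mul_pi_sub, hk.neg_one_pow, neg_one_mul]
  have hθ : θ < π := by rw [div_lt_iff₀ (by norm_num)]; nlinarith [pi_pos]
  have hcos : -1 < cos θ := by
    rw [← cos_pi]
    exact cos_lt_cos_of_nonneg_of_le_pi (by positivity) le_rfl hθ
  rw [show 4 * θ = 2 * (2 * θ) by ring, cos_two_mul, cos_two_mul, cos_three_mul] at h43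
  have hfac : (cos θ + 1) * (8 * cos θ ^ 3 - 4 * cos θ ^ 2 - 4 * cos θ + 1) = 0 := by
    linear_combination h43
  have := (mul_eq_zero.mp hfac).resolve_left (by linarith)
  linear_combination this

lemma cubic_eq_mul_of_roots {a b c : ℝ} (hab : a ≠ b) (hbc : b ≠ c) (hac : a ≠ c)
    (ha : a ^ 3 - a ^ 2 - 2 * a + 1 = 0) (hb : b ^ 3 - b ^ 2 - 2 * b + 1 = 0)
    (hc : c ^ 3 - c ^ 2 - 2 * c + 1 = 0) (x : ℝ) :
    x ^ 3 - x ^ 2 - 2 * x + 1 = (x - a) * (x - b) * (x - c) := by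
  have hab' : a ^ 2 + a * b + b ^ 2 - a - b - 2 = 0 :=
    (mul_eq_zero.mp (by linear_combination ha - hb)).resolve_left (sub_ne_zero.mpr hab)
  have hbc' : b ^ 2 + b * c + c ^ 2 - b - c - 2 = 0 :=
    (mul_eq_zero.mp (by linear_combination hb - hc)).resolve_left (sub_ne_zero.mpr hbc)
  have hsum : a + b + c - 1 = 0 :=
    (mul_eq_zero.mp (by linear_combination hab' - hbc')).resolve_left (sub_ne_zero.mpr hac)
  linear_combination (x - a) * hab' + ha + (x ^ 2 - a * x - b * x + a * b) * hsum

lemma le_or_mem_Icc_of_cubic_nonpos {a b c x : ℝ} (hab : a < b) (hbc : b < c)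
    (ha : a ^ 3 - a ^ 2 - 2 * a + 1 = 0) (hb : b ^ 3 - b ^ 2 - 2 * b + 1 = 0)
    (hc : c ^ 3 - c ^ 2 - 2 * c + 1 = 0) (hx : x ^ 3 - x ^ 2 - 2 * x + 1 ≤ 0) :
    x ≤ a ∨ x ∈ Icc b c := by
  rw [cubic_eq_mul_of_roots hab.ne hbc.ne (hab.trans hbc).ne ha hb hc] at hx
  by_contra! h
  obtain ⟨hax, hx'⟩ := h
  rcases lt_or_ge x b with hxb | hbx
  · exact hx.not_gt (mul_pos_of_neg_of_neg (mul_neg_of_pos_of_neg (by linarith) (by linarith))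
      (by linarith))
  · have hcx : c < x := lt_of_not_ge fun hxc => hx' ⟨hbx, hxc⟩
    exact hx.not_gt (mul_pos (mul_pos (by linarith) (by linarith)) (by linarith))

lemma two_cos_lt_two_cos {x y : ℝ} (hx : 0 ≤ x) (hy : y ≤ π) (hxy : x < y) :
    2 * cos y < 2 * cos x := by
  linarith [cos_lt_cos_of_nonneg_of_le_pi hx hy hxy]

lemma le_or_mem_Icc_two_cos_of_cubic_nonpos {x : ℝ} (hx : x ^ 3 - x ^ 2 - 2 * x + 1 ≤ 0) :
    x ≤ 2 * cos (5 * π / 7) ∨ x ∈ Icc (2 * cos (3 * π / 7)) (2 * cos (π / 7)) := by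
  have h1 := cubic_two_cos_odd_mul_pi_div_seven_eq_zero (k := 1) odd_one (by norm_num)
  have h3 := cubic_two_cos_odd_mul_pi_div_seven_eq_zero (k := 3) (by decide) (by norm_num)
  have h5 := cubic_two_cos_odd_mul_pi_div_seven_eq_zero (k := 5) (by decide) (by norm_num)
  push_cast at h1 h3 h5
  rw [one_mul] at h1
  exact le_or_mem_Icc_of_cubic_nonpos
    (two_cos_lt_two_cos (by positivity) (by linarith [pi_pos]) (by linarith [pi_pos]))
    (two_cos_lt_two_cos (by positivity) (by linarith [pi_pos]) (by linarith [pi_pos]))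
    h5 h3 h1 hx

lemma one_le_two_cos_pi_div_seven : 1 ≤ 2 * cos (π / 7) := by
  have h := two_cos_lt_two_cos (x := π / 7) (y := π / 3) (by positivity) (by linarith [pi_pos])
    (by linarith [pi_pos])
  rw [cos_pi_div_three] at h
  linarith

lemma neg_one_add_sqrt_five_div_two_le_two_cos_five_pi_div_seven :
    -(1 + √5) / 2 ≤ 2 * cos (5 * π / 7) := by
  have h := two_cos_lt_two_cos (x := 5 * π / 7) (y := π - π / 5) (by positivity)
    (by linarith [pi_pos]) (by linarith [pi_pos])
  rw [cos_pi_sub, cos_pi_div_five] at h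
  linarith

lemma two_cos_three_pi_div_seven_le_sqrt_five_sub_one_div_two :
    2 * cos (3 * π / 7) ≤ (√5 - 1) / 2 := by
  have h := two_cos_lt_two_cos (x := 2 * (π / 5)) (y := 3 * π / 7) (by positivity)
    (by linarith [pi_pos]) (by linarith [pi_pos])
  rw [cos_two_mul, cos_pi_div_five] at h
  nlinarith [sq_sqrt (show (0 : ℝ) ≤ 5 by norm_num)]

lemma mem_Icc_of_sq_add_sub_one_nonpos {μ : ℝ} (h : μ ^ 2 + μ - 1 ≤ 0) :
    μ ∈ Icc (-(1 + √5) / 2) ((√5 - 1) / 2) := by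
  have h5 := sq_sqrt (show (0 : ℝ) ≤ 5 by norm_num)
  have hfac : μ ^ 2 + μ - 1 = (μ + (1 + √5) / 2) * (μ - (√5 - 1) / 2) := by
    linear_combination h5 / 4
  rw [hfac] at h
  rcases mul_nonpos_iff.mp h with ⟨h1, h2⟩ | ⟨h1, h2⟩
  · exact ⟨by linarith, by linarith⟩
  · linarith [sqrt_pos.mpr (show (0 : ℝ) < 5 by norm_num)]

lemma le_of_sq_sub_sub_one_nonneg {μ : ℝ} (hμ : μ ≤ 1) (h : 0 ≤ μ ^ 2 - μ - 1) :
    μ ≤ (1 - √5) / 2 := by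
  have h5 := sq_sqrt (show (0 : ℝ) ≤ 5 by norm_num)
  have hfac : μ ^ 2 - μ - 1 = (μ - (1 - √5) / 2) * (μ - (1 + √5) / 2) := by
    linear_combination h5 / 4
  rw [hfac] at h
  rcases mul_nonneg_iff.mp h with ⟨_, h2⟩ | ⟨h1, _⟩
  · linarith [sqrt_nonneg 5, show 1 < √5 by rw [lt_sqrt zero_le_one]; norm_num]
  · linarith

section Rayleigh

variable {μ t s β g δ : ℝ}

lemma sq_sub_sub_one_nonneg_of_neg (hs : 0 < s) (hβ : 0 ≤ β) (hg : 0 ≤ g)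
    (hE0 : s = β + (μ - 1) ^ 2 * t) (hH : μ * (μ - 1) * t + μ * g = (μ + 1) * s)
    (hμ : μ < 0) : 0 ≤ μ ^ 2 - μ - 1 := by
  have hid : (μ ^ 2 - μ - 1) * s = -μ * β + μ * (μ - 1) * g := by
    linear_combination -(μ - 1) * hH - μ * hE0
  refine nonneg_of_mul_nonneg_left ?_ hs
  rw [hid]
  have := mul_nonneg (mul_nonneg_of_nonpos_of_nonpos hμ.le (by linarith : μ - 1 ≤ 0)) hg
  nlinarith

lemma sq_add_sub_one_nonpos_of_lt_one (hs : 0 < s) (ht : 0 ≤ t) (hG : μ ^ 2 * g ≤ s)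
    (hH : μ * (μ - 1) * t + μ * g = (μ + 1) * s) (hμ : μ < 1) : μ ^ 2 + μ - 1 ≤ 0 := by
  have hid : (μ ^ 2 + μ - 1) * s = μ ^ 2 * (μ - 1) * t - (s - μ ^ 2 * g) := by
    linear_combination -μ * hH
  refine nonpos_of_mul_nonpos_left ?_ hs
  rw [hid]
  have := mul_nonpos_of_nonpos_of_nonneg
    (mul_nonpos_of_nonneg_of_nonpos (sq_nonneg μ) (by linarith : μ - 1 ≤ 0)) ht
  linarith

lemma cubic_nonpos_of_one_lt (hs : 0 < s) (hβ : 0 ≤ β) (hG : μ ^ 2 * g ≤ s)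
    (hE0 : s = β + (μ - 1) ^ 2 * t) (hH : μ * (μ - 1) * t + μ * g = (μ + 1) * s)
    (hμ : 1 < μ) : μ ^ 3 - μ ^ 2 - 2 * μ + 1 ≤ 0 := by
  have hid : (μ ^ 3 - μ ^ 2 - 2 * μ + 1) * s = -μ ^ 2 * β - (μ - 1) * (s - μ ^ 2 * g) := by
    linear_combination -μ * (μ - 1) * hH - μ ^ 2 * hE0
  refine nonpos_of_mul_nonpos_left ?_ hs
  rw [hid]
  nlinarith [mul_nonneg (sq_nonneg μ) hβ,
    mul_nonneg (by linarith : 0 ≤ μ - 1) (by linarith : 0 ≤ s - μ ^ 2 * g)]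

lemma cubic_nonpos_of_lt_one (hs : 0 < s) (ht : 0 ≤ t) (hg : 0 ≤ g) (hG : μ ^ 2 * g ≤ s)
    (hδ : δ ≤ t) (hH : μ * (μ - 1) * t + μ * g = (μ + 1) * s)
    (hE2 : μ ^ 2 * δ = (μ + 1) ^ 2 * s - 2 * (μ + 1) * (μ * g) + g)
    (hμ : μ < 1) (hneg : (μ + 1) * (μ ^ 2 - μ - 1) < 0) : μ ^ 3 - μ ^ 2 - 2 * μ + 1 ≤ 0 := by
  set c := -2 * μ ^ 3 + μ ^ 2 + 3 * μ - 1
  have hstar : 0 ≤ (μ + 1) * (μ ^ 2 - μ - 1) * s + c * g := by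
    have hid : (1 - μ) * μ ^ 2 * (t - δ) = (μ + 1) * (μ ^ 2 - μ - 1) * s + c * g := by
      linear_combination -μ * hH + (μ - 1) * hE2
    rw [← hid]
    exact mul_nonneg (mul_nonneg (by linarith) (sq_nonneg μ)) (by linarith)
  have hc : 0 < c := by
    by_contra! hc
    nlinarith [mul_neg_of_neg_of_pos hneg hs, mul_nonpos_of_nonpos_of_nonneg hc hg]
  have hpq : 0 ≤ (μ ^ 3 - μ ^ 2 - 2 * μ + 1) * (μ ^ 2 + μ - 1) := by
    refine nonneg_of_mul_nonneg_left ?_ hs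
    have hid : (μ ^ 3 - μ ^ 2 - 2 * μ + 1) * (μ ^ 2 + μ - 1) * s
        = μ ^ 2 * ((μ + 1) * (μ ^ 2 - μ - 1) * s + c * g) + c * (s - μ ^ 2 * g) := by ring
    rw [hid]
    exact add_nonneg (mul_nonneg (sq_nonneg μ) hstar) (mul_nonneg hc.le (by linarith))
  have hq := sq_add_sub_one_nonpos_of_lt_one hs ht hG hH hμ
  by_contra! hp
  have hq0 : μ ^ 2 + μ - 1 = 0 := le_antisymm hq (nonneg_of_mul_nonneg_right hpq hp)
  linarith [show μ ^ 3 - μ ^ 2 - 2 * μ + 1 = μ - 1 by linear_combination (μ - 2) * hq0]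

lemma mem_eigenvalue_intervals (hs : 0 < s) (ht : 0 ≤ t) (hβ : 0 ≤ β) (hg : 0 ≤ g)
    (hG : μ ^ 2 * g ≤ s) (hδ : δ ≤ t) (hE0 : s = β + (μ - 1) ^ 2 * t)
    (hH : μ * (μ - 1) * t + μ * g = (μ + 1) * s)
    (hE2 : μ ^ 2 * δ = (μ + 1) ^ 2 * s - 2 * (μ + 1) * (μ * g) + g) :
    μ ∈ Icc (-(1 + √5) / 2) (2 * cos (5 * π / 7)) ∪ Icc (-1 : ℝ) ((1 - √5) / 2)
      ∪ Icc (2 * cos (3 * π / 7)) ((√5 - 1) / 2) ∪ Icc (1 : ℝ) (2 * cos (π / 7)) := by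
  have hμ0 : μ ≠ 0 := by rintro rfl; linarith
  have hr1 : 2 * cos (5 * π / 7) < 0 := by
    simpa using two_cos_lt_two_cos (x := π / 2) (by positivity) (by linarith [pi_pos])
      (by linarith [pi_pos])
  have hr2 : 0 < 2 * cos (3 * π / 7) := by
    simpa using two_cos_lt_two_cos (y := π / 2) (by positivity) (by linarith [pi_pos])
      (by linarith [pi_pos])
  simp only [mem_union, mem_Icc]
  rcases lt_or_ge μ 1 with hlt | hge
  · obtain ⟨hlo, hhi⟩ :=
      mem_Icc_of_sq_add_sub_one_nonpos (sq_add_sub_one_nonpos_of_lt_one hs ht hG hH hlt)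
    rcases hμ0.lt_or_gt with hneg | hpos
    · rcases lt_or_ge μ (-1) with hm1 | hm1
      · have hp := cubic_nonpos_of_lt_one hs ht hg hG hδ hH hE2 hlt (by nlinarith)
        rcases le_or_mem_Icc_two_cos_of_cubic_nonpos hp with h | h
        · exact Or.inl (Or.inl (Or.inl ⟨hlo, h⟩))
        · linarith [h.1]
      · exact Or.inl (Or.inl (Or.inr ⟨hm1, le_of_sq_sub_sub_one_nonneg (by linarith)
          (sq_sub_sub_one_nonneg_of_neg hs hβ hg hE0 hH hneg)⟩))
    · have hp := cubic_nonpos_of_lt_one hs ht hg hG hδ hH hE2 hlt (by nlinarith)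
      rcases le_or_mem_Icc_two_cos_of_cubic_nonpos hp with h | h
      · linarith
      · exact Or.inl (Or.inr ⟨h.1, hhi⟩)
  · refine Or.inr ⟨hge, ?_⟩
    rcases hge.eq_or_lt with rfl | hgt
    · exact one_le_two_cos_pi_div_seven
    · have hp := cubic_nonpos_of_one_lt hs hβ hG hE0 hH hgt
      rcases le_or_mem_Icc_two_cos_of_cubic_nonpos hp with h | h
      · linarith
      · exact h.2

end Rayleigh

section BlockEquations

variable {ι κ ν : Type*} [Fintype ι] [Fintype κ] [Fintype ν] [DecidableEq ι]
  {A1 : Matrix ι ι ℝ} {A2 : Matrix κ κ ℝ} {B1 : Matrix κ ι ℝ} {B2 : Matrix ν κ ℝ}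
  {x1 : ι → ℝ} {x2 : κ → ℝ} {x3 : ν → ℝ}

lemma add_mul_inv_mul_transpose_mulVec (hA1 : IsUnit A1.det) {c : ℝ}
    (hrow1 : B1ᵀ *ᵥ x2 = c • A1 *ᵥ x1) :
    (A2 + B1 * A1⁻¹ * B1ᵀ) *ᵥ x2 = A2 *ᵥ x2 + c • B1 *ᵥ x1 := by
  rw [add_mulVec, ← mulVec_mulVec, ← mulVec_mulVec, hrow1, mulVec_smul, mulVec_mulVec,
    nonsing_inv_mul _ hA1, one_mulVec, mulVec_smul]

lemma mem_eigenvalue_intervals_of_block_equations [DecidableEq κ] {μ : ℝ} (hA1 : A1.PosDef)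
    (hA2 : A2.PosSemidef) (hS1 : (A2 + B1 * A1⁻¹ * B1ᵀ).PosDef) (hx2 : x2 ≠ 0)
    (hrow1 : B1ᵀ *ᵥ x2 = (μ - 1) • A1 *ᵥ x1)
    (hrow2 : μ • B1 *ᵥ x1 = (μ + 1) • (A2 + B1 * A1⁻¹ * B1ᵀ) *ᵥ x2 - B2ᵀ *ᵥ x3)
    (h3 : B2 *ᵥ x2 = μ • (B2 * (A2 + B1 * A1⁻¹ * B1ᵀ)⁻¹ * B2ᵀ) *ᵥ x3) :
    μ ∈ Icc (-(1 + √5) / 2) (2 * cos (5 * π / 7)) ∪ Icc (-1 : ℝ) ((1 - √5) / 2)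
      ∪ Icc (2 * cos (3 * π / 7)) ((√5 - 1) / 2) ∪ Icc (1 : ℝ) (2 * cos (π / 7)) := by
  set S1 := A2 + B1 * A1⁻¹ * B1ᵀ
  have hP : x2 ⬝ᵥ B1 *ᵥ x1 = (μ - 1) * (x1 ⬝ᵥ A1 *ᵥ x1) := by
    rw [dotProduct_mulVec, ← mulVec_transpose, hrow1, smul_dotProduct, smul_eq_mul, dotProduct_comm]
  have hR : x2 ⬝ᵥ B2ᵀ *ᵥ x3 = μ * (x3 ⬝ᵥ (B2 * S1⁻¹ * B2ᵀ) *ᵥ x3) := by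
    rw [dotProduct_mulVec, vecMul_transpose, h3, smul_dotProduct, smul_eq_mul, dotProduct_comm]
  have hg : x3 ⬝ᵥ (B2 * S1⁻¹ * B2ᵀ) *ᵥ x3 = B2ᵀ *ᵥ x3 ⬝ᵥ S1⁻¹ *ᵥ (B2ᵀ *ᵥ x3) :=
    dotProduct_mul_mul_transpose_mulVec _ _ _
  refine mem_eigenvalue_intervals (t := x1 ⬝ᵥ A1 *ᵥ x1) (s := x2 ⬝ᵥ S1 *ᵥ x2)
    (β := x2 ⬝ᵥ A2 *ᵥ x2) (g := x3 ⬝ᵥ (B2 * S1⁻¹ * B2ᵀ) *ᵥ x3)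
    (δ := B1 *ᵥ x1 ⬝ᵥ S1⁻¹ *ᵥ (B1 *ᵥ x1)) ?hs ?ht ?hβ ?hg (hS1.sq_mul_dotProduct_le_of_mulVec_eq h3)
    (hA1.dotProduct_inv_mulVec_le_of_posSemidef_sub hS1 (by rwa [add_sub_cancel_right]) x1)
    ?hE0 ?hH ?hE2
  case hs => simpa only [star_trivial] using hS1.dotProduct_mulVec_pos hx2
  case ht => simpa only [star_trivial] using hA1.posSemidef.dotProduct_mulVec_nonneg x1
  case hβ => simpa only [star_trivial] using hA2.dotProduct_mulVec_nonneg x2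
  case hg =>
    rw [hg]
    simpa only [star_trivial] using hS1.inv.posSemidef.dotProduct_mulVec_nonneg (B2ᵀ *ᵥ x3)
  case hE0 =>
    rw [add_mul_inv_mul_transpose_mulVec hA1.det_pos.ne'.isUnit hrow1, dotProduct_add,
      dotProduct_smul, hP, smul_eq_mul]
    ring
  case hH =>
    have h := congrArg (x2 ⬝ᵥ ·) hrow2
    simp only [dotProduct_smul, dotProduct_sub, hP, hR, smul_eq_mul] at h
    linarith
  case hE2 =>
    have h := (isHermitian_iff_isSymm.mp hS1.isHermitian).dotProduct_inv_mulVec_smul_mulVec_sub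
      hS1.det_pos.ne'.isUnit (μ + 1) x2 (B2ᵀ *ᵥ x3)
    rw [← hrow2, hR, ← hg, mulVec_smul, smul_dotProduct, dotProduct_smul] at h
    simpa only [smul_eq_mul, ← mul_assoc, ← sq] using h

end BlockEquations

theorem stmt1 {n m p : ℕ}
    (A1 : Matrix (Fin n) (Fin n) ℝ) (A2 : Matrix (Fin m) (Fin m) ℝ)
    (B1 : Matrix (Fin m) (Fin n) ℝ) (B2 : Matrix (Fin p) (Fin m) ℝ)
    (hA1 : A1.PosDef) (hA2 : A2.PosSemidef)
    (hS1 : (A2 + B1 * A1⁻¹ * B1ᵀ).PosDef)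
    (hS2 : (B2 * (A2 + B1 * A1⁻¹ * B1ᵀ)⁻¹ * B2ᵀ).PosDef)
    (μ : ℝ) (x1 : Fin n → ℝ) (x2 : Fin m → ℝ) (x3 : Fin p → ℝ)
    (hx : ¬ (x1 = 0 ∧ x2 = 0 ∧ x3 = 0))
    (h1 : A1.mulVec x1 + B1ᵀ.mulVec x2 = μ • A1.mulVec x1)
    (h2 : B1.mulVec x1 - A2.mulVec x2 + B2ᵀ.mulVec x3
      = μ • (A2 + B1 * A1⁻¹ * B1ᵀ).mulVec x2)
    (h3 : B2.mulVec x2 = μ • (B2 * (A2 + B1 * A1⁻¹ * B1ᵀ)⁻¹ * B2ᵀ).mulVec x3) :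
    μ ∈ Set.Icc (-(1 + Real.sqrt 5)/2) (2 * Real.cos (5*Real.pi/7))
      ∪ Set.Icc (-1 : ℝ) ((1 - Real.sqrt 5)/2)
      ∪ Set.Icc (2 * Real.cos (3*Real.pi/7)) ((Real.sqrt 5 - 1)/2)
      ∪ Set.Icc (1 : ℝ) (2 * Real.cos (Real.pi/7)) := by
  rcases eq_or_ne μ 1 with rfl | hμ1
  · exact Or.inr ⟨le_rfl, one_le_two_cos_pi_div_seven⟩
  have hrow1 : B1ᵀ *ᵥ x2 = (μ - 1) • A1 *ᵥ x1 := by linear_combination (norm := module) h1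
  have hrow2 : μ • B1 *ᵥ x1 = (μ + 1) • (A2 + B1 * A1⁻¹ * B1ᵀ) *ᵥ x2 - B2ᵀ *ᵥ x3 := by
    linear_combination (norm := module)
      h2 - add_mul_inv_mul_transpose_mulVec hA1.det_pos.ne'.isUnit hrow1
  have hx2 : x2 ≠ 0 := by
    rintro rfl
    have hx1 : x1 = 0 := eq_zero_of_mulVec_eq_zero hA1.det_pos.ne'
      (smul_right_injective _ (sub_ne_zero.mpr hμ1) (by simpa using hrow1.symm))
    have hR : B2ᵀ *ᵥ x3 = 0 := by simpa [hx1] using h2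
    have hx3 : x3 = 0 := eq_zero_of_mulVec_eq_zero hS2.det_pos.ne'
      (by rw [← mulVec_mulVec, ← mulVec_mulVec, hR, mulVec_zero, mulVec_zero])
    exact hx ⟨hx1, rfl, hx3⟩
  exact mem_eigenvalue_intervals_of_block_equations hA1 hA2 hS1 hx2 hrow1 hrow2 h3
end

section
/- Let $A_1$, $S_1 = A_2 + B_1 A_1^{-1} B_1^T$, $S_2 = A_3 + B_2 S_1^{-1} B_2^T$ be invertible real matrices. Define $\mathcal{A} = \begin{pmatrix} A_1 & B_1^T & 0 \\ B_1 & -A_2 & B_2^T \\ 0 & B_2 & A_3 \end{pmatrix}$ and the block lower-triangular preconditioner $\mathcal{P}_L = \begin{pmatrix} A_1 & 0 & 0 \\ B_1 & -S_1 & 0 \\ 0 & B_2 & S_2 \end{pmatrix}$. Then $\mathcal{P}_L^{-1}\mathcal{A} = \begin{pmatrix} \mathrm{I} & A_1^{-1}B_1^T & 0 \\ 0 & \mathrm{I} & -S_1^{-1}B_2^T \\ 0 & 0 & \mathrm{I} \end{pmatrix}$, and in particular all eigenvalues of $\mathcal{P}_L^{-1}\mathcal{A}$ equal $1$. -/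
/-!
Block multiplication, using only the defining identities of the Schur complements `S₁` and `S₂`,
shows `𝒫_L R = 𝒜` for the stated block upper unitriangular `R`; as `𝒫_L` is block lower
triangular with invertible diagonal blocks, `𝒫_L⁻¹ 𝒜 = R`. Then `R - 1` is nilpotent, so an
eigenvalue `μ` of `R` makes `μ - 1` a nilpotent real number, i.e. `μ = 1`.
-/

open Matrix

namespace Matrix

variable {m n R : Type*} [Fintype m] [Fintype n] [DecidableEq m] [DecidableEq n]

section Semiring

variable [Semiring R]

theorem fromBlocks_zero₂₁_pow (A : Matrix m m R) (B : Matrix m n R) (D : Matrix n n R) (k : ℕ) :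
    ∃ C, fromBlocks A B 0 D ^ k = fromBlocks (A ^ k) C 0 (D ^ k) := by
  induction k with
  | zero => exact ⟨0, by rw [pow_zero, pow_zero, pow_zero, fromBlocks_one]⟩
  | succ k ih =>
    obtain ⟨C, hC⟩ := ih
    exact ⟨A ^ k * B + C * D, by simp [pow_succ, hC, fromBlocks_multiply]⟩

/-- `M ^ a` vanishes on the upper-left block and `M ^ d` on the lower-right one. -/
theorem isNilpotent_fromBlocks_zero₂₁ {A : Matrix m m R} {D : Matrix n n R} (hA : IsNilpotent A)
    (B : Matrix m n R) (hD : IsNilpotent D) : IsNilpotent (fromBlocks A B 0 D) := by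
  obtain ⟨a, ha⟩ := hA
  obtain ⟨d, hd⟩ := hD
  obtain ⟨C, hC⟩ := fromBlocks_zero₂₁_pow A B D a
  obtain ⟨C', hC'⟩ := fromBlocks_zero₂₁_pow A B D d
  exact ⟨a + d, by simp [pow_add, hC, hC', ha, hd, fromBlocks_multiply]⟩

end Semiring

theorem isNilpotent_fromBlocks_zero₂₁_sub_one [Ring R] {A : Matrix m m R} {D : Matrix n n R}
    (hA : IsNilpotent (A - 1)) (B : Matrix m n R) (hD : IsNilpotent (D - 1)) :
    IsNilpotent (fromBlocks A B 0 D - 1) := by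
  have h : fromBlocks A B 0 D - 1 = fromBlocks (A - 1) B 0 (D - 1) := by
    rw [← fromBlocks_one, sub_eq_add_neg, fromBlocks_neg, fromBlocks_add]
    simp [sub_eq_add_neg]
  exact h ▸ isNilpotent_fromBlocks_zero₂₁ hA B hD

theorem eq_one_of_mulVec_eq_smul_of_isNilpotent_sub_one [CommRing R] [IsDomain R]
    {M : Matrix n n R} (hM : IsNilpotent (M - 1)) {μ : R} {x : n → R} (hx : x ≠ 0)
    (h : M *ᵥ x = μ • x) : μ = 1 := by
  have hx' : (M - 1) *ᵥ x = (μ - 1) • x := by rw [sub_mulVec, h, one_mulVec, sub_smul, one_smul]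
  have hev : Module.End.HasEigenvalue (toLin' (M - 1)) (μ - 1) :=
    Module.End.hasEigenvalue_of_hasEigenvector ⟨Module.End.mem_eigenspace_iff.mpr hx', hx⟩
  exact sub_eq_zero.mp (hev.isNilpotent_of_isNilpotent (hM.map toLinAlgEquiv')).eq_zero

theorem fromBlocks_zero₁₂_mul_fromBlocks_one_inv_mul [CommRing R] {A : Matrix m m R}
    (hA : IsUnit A.det) (B : Matrix m n R) (C : Matrix n m R) (D : Matrix n n R) :
    fromBlocks A 0 C D * fromBlocks 1 (A⁻¹ * B) 0 1 = fromBlocks A B C (C * A⁻¹ * B + D) := by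
  simp [fromBlocks_multiply, mul_nonsing_inv_cancel_left _ _ hA, Matrix.mul_assoc]

theorem fromBlocks_lowerPreconditioner_mul {l : Type*} [Fintype l] [DecidableEq l] [CommRing R]
    {A₁ : Matrix l l R} {A₂ S₁ : Matrix m m R} {A₃ S₂ : Matrix n n R} {B₁ : Matrix m l R} {B₂ : Matrix n m R} (hA₁ : IsUnit A₁.det)
    (hS₁ : IsUnit S₁.det) (hS₁_eq : S₁ = A₂ + B₁ * A₁⁻¹ * B₁ᵀ)
    (hS₂_eq : S₂ = A₃ + B₂ * S₁⁻¹ * B₂ᵀ) :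
    fromBlocks (fromBlocks A₁ 0 B₁ (-S₁)) 0 (fromCols 0 B₂) S₂ *
        fromBlocks (fromBlocks 1 (A₁⁻¹ * B₁ᵀ) 0 1) (fromRows 0 (-(S₁⁻¹ * B₂ᵀ))) 0 1 =
      fromBlocks (fromBlocks A₁ B₁ᵀ B₁ (-A₂)) (fromRows 0 B₂ᵀ) (fromCols 0 B₂) A₃ := by
  have h₂₂ : B₁ * A₁⁻¹ * B₁ᵀ + -S₁ = -A₂ := by rw [hS₁_eq]; abel
  have h₃₃ : -(B₂ * (S₁⁻¹ * B₂ᵀ)) + S₂ = A₃ := by rw [hS₂_eq, Matrix.mul_assoc]; abel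
  rw [fromBlocks_multiply, fromBlocks_zero₁₂_mul_fromBlocks_one_inv_mul hA₁, h₂₂,
    fromBlocks_mul_fromRows, fromCols_mul_fromBlocks, fromCols_mul_fromRows]
  simp [mul_nonsing_inv_cancel_left _ _ hS₁, h₃₃]

end Matrix

theorem stmt3 {n m p : ℕ}
    (A1 : Matrix (Fin n) (Fin n) ℝ) (A2 : Matrix (Fin m) (Fin m) ℝ)
    (A3 : Matrix (Fin p) (Fin p) ℝ)
    (B1 : Matrix (Fin m) (Fin n) ℝ) (B2 : Matrix (Fin p) (Fin m) ℝ)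
    (S1 S2 : Matrix _ _ ℝ)
    (hS1 : S1 = A2 + B1 * A1⁻¹ * B1ᵀ)
    (hS2 : S2 = A3 + B2 * S1⁻¹ * B2ᵀ)
    (hA1 : IsUnit A1.det) (hS1u : IsUnit S1.det) (hS2u : IsUnit S2.det)
    (𝒜 PL : Matrix ((Fin n ⊕ Fin m) ⊕ Fin p) ((Fin n ⊕ Fin m) ⊕ Fin p) ℝ)
    (h𝒜 : 𝒜 = Matrix.fromBlocks (Matrix.fromBlocks A1 B1ᵀ B1 (-A2))
      (Matrix.fromRows 0 B2ᵀ) (Matrix.fromCols 0 B2) A3)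
    (hPL : PL = Matrix.fromBlocks (Matrix.fromBlocks A1 0 B1 (-S1))
      0 (Matrix.fromCols 0 B2) S2) :
    PL⁻¹ * 𝒜 = Matrix.fromBlocks (Matrix.fromBlocks 1 (A1⁻¹ * B1ᵀ) 0 1)
      (Matrix.fromRows 0 (-(S1⁻¹ * B2ᵀ))) 0 1
    ∧ ∀ (μ : ℝ) (x : (Fin n ⊕ Fin m) ⊕ Fin p → ℝ), x ≠ 0 →
        (PL⁻¹ * 𝒜).mulVec x = μ • x → μ = 1 := by
  have hPL_det : IsUnit PL.det := by
    rw [hPL, det_fromBlocks_zero₁₂, det_fromBlocks_zero₁₂, det_neg]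
    exact (hA1.mul ((isUnit_one.neg.pow _).mul hS1u)).mul hS2u
  have hfactor : PL⁻¹ * 𝒜 = fromBlocks (fromBlocks 1 (A1⁻¹ * B1ᵀ) 0 1)
      (fromRows 0 (-(S1⁻¹ * B2ᵀ))) 0 1 := by
    rw [h𝒜, ← fromBlocks_lowerPreconditioner_mul hA1 hS1u hS1 hS2, ← hPL,
      nonsing_inv_mul_cancel_left _ _ hPL_det]
  refine ⟨hfactor, fun μ x hx hμ => ?_⟩
  have hunipotent : IsNilpotent (PL⁻¹ * 𝒜 - 1) := by
    rw [hfactor]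
    exact isNilpotent_fromBlocks_zero₂₁_sub_one
      (isNilpotent_fromBlocks_zero₂₁_sub_one (by simp) _ (by simp)) _ (by simp)
  exact eq_one_of_mulVec_eq_smul_of_isNilpotent_sub_one hunipotent hx hμ
end

section
/- Let $A_1$, $S_1 = A_2 + B_1 A_1^{-1} B_1^T$, $S_2 = A_3 + B_2 S_1^{-1} B_2^T$ be invertible real matrices, $\mathcal{A}$ the double saddle-point matrix with blocks $(A_1, B_1^T, 0; B_1, -A_2, B_2^T; 0, B_2, A_3)$, and $\mathcal{P}_U = \begin{pmatrix} A_1 & B_1^T & 0 \\ 0 & -S_1 & B_2^T \\ 0 & 0 & S_2 \end{pmatrix}$. Then $\mathcal{A}\mathcal{P}_U^{-1} = \begin{pmatrix} \mathrm{I} & 0 & 0 \\ B_1 A_1^{-1} & \mathrm{I} & 0 \\ 0 & -B_2 S_1^{-1} & \mathrm{I} \end{pmatrix}$, and all eigenvalues of $\mathcal{P}_U^{-1}\mathcal{A}$ equal $1$. -/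
/-!
Block Gaussian elimination factors the double saddle-point matrix as `𝒜 = L * P_U` with `L`
block lower unitriangular, which gives `𝒜 * P_U⁻¹ = L`. The matrix `P_U⁻¹ * 𝒜` has the same
characteristic polynomial as `𝒜 * P_U⁻¹ = L`, namely `(X - 1) ^ N`, so every eigenvalue is `1`.
-/

open Matrix

namespace Matrix

variable {ι₁ ι₂ ι₃ R : Type*} [Fintype ι₁] [Fintype ι₂] [Fintype ι₃]
  [DecidableEq ι₁] [DecidableEq ι₂] [DecidableEq ι₃]

theorem doubleSaddlePoint_eq_mul [CommRing R]
    (A₁ : Matrix ι₁ ι₁ R) (A₂ : Matrix ι₂ ι₂ R) (A₃ : Matrix ι₃ ι₃ R)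
    (B₁ : Matrix ι₂ ι₁ R) (B₂ : Matrix ι₃ ι₂ R) {S₁ S₂ : Matrix _ _ R}
    (hS₁ : S₁ = A₂ + B₁ * A₁⁻¹ * B₁ᵀ) (hS₂ : S₂ = A₃ + B₂ * S₁⁻¹ * B₂ᵀ)
    (hA₁ : IsUnit A₁.det) (hS₁u : IsUnit S₁.det) :
    fromBlocks (fromBlocks A₁ B₁ᵀ B₁ (-A₂)) (fromRows 0 B₂ᵀ) (fromCols 0 B₂) A₃ =
      fromBlocks (fromBlocks 1 0 (B₁ * A₁⁻¹) 1) 0 (fromCols 0 (-(B₂ * S₁⁻¹))) 1 *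
        fromBlocks (fromBlocks A₁ B₁ᵀ 0 (-S₁)) (fromRows 0 B₂ᵀ) 0 S₂ := by
  have hB₁ : B₁ * A₁⁻¹ * A₁ = B₁ := by
    rw [Matrix.mul_assoc, nonsing_inv_mul A₁ hA₁, Matrix.mul_one]
  have hB₂ : B₂ * S₁⁻¹ * S₁ = B₂ := by
    rw [Matrix.mul_assoc, nonsing_inv_mul S₁ hS₁u, Matrix.mul_one]
  simp only [fromBlocks_multiply, fromBlocks_mul_fromRows, fromCols_mul_fromBlocks,
    fromCols_mul_fromRows, Matrix.zero_mul, Matrix.mul_zero, Matrix.one_mul, Matrix.neg_mul,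
    Matrix.mul_neg, add_zero, zero_add, neg_neg, hB₁, hB₂]
  congr 2
  · rw [neg_zero, add_zero]
  · rw [hS₁]; abel
  · rw [hS₂]; abel

theorem charpoly_fromBlocks_unitriangular [CommRing R]
    (C : Matrix ι₂ ι₁ R) (D : Matrix ι₃ (ι₁ ⊕ ι₂) R) :
    (fromBlocks (fromBlocks 1 0 C 1) 0 D 1).charpoly =
      (Polynomial.X - 1) ^ (Fintype.card ι₁ + Fintype.card ι₂ + Fintype.card ι₃) := by
  simp only [charpoly_fromBlocks_zero₁₂, charpoly_one, pow_add]

theorem isRoot_charpoly_of_mulVec_eq_smul [CommRing R] [IsDomain R] {M : Matrix ι₁ ι₁ R}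
    {μ : R} {x : ι₁ → R} (hx : x ≠ 0) (hMx : M *ᵥ x = μ • x) : M.charpoly.IsRoot μ := by
  rw [Polynomial.IsRoot, eval_charpoly, ← exists_mulVec_eq_zero_iff]
  exact ⟨x, hx, by rw [sub_mulVec, hMx, scalar_apply, diagonal_const_mulVec, sub_self]⟩

theorem eq_one_of_charpoly_eq_X_sub_one_pow [CommRing R] [IsDomain R] {M : Matrix ι₁ ι₁ R}
    {k : ℕ} (hM : M.charpoly = (Polynomial.X - 1) ^ k) {μ : R} {x : ι₁ → R} (hx : x ≠ 0)
    (hMx : M *ᵥ x = μ • x) : μ = 1 := by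
  have hroot := isRoot_charpoly_of_mulVec_eq_smul hx hMx
  rw [hM, Polynomial.IsRoot, Polynomial.eval_pow, Polynomial.eval_sub, Polynomial.eval_X,
    Polynomial.eval_one] at hroot
  exact sub_eq_zero.mp (IsNilpotent.eq_zero ⟨k, hroot⟩)

end Matrix

theorem stmt4 {n m p : ℕ}
    (A1 : Matrix (Fin n) (Fin n) ℝ) (A2 : Matrix (Fin m) (Fin m) ℝ)
    (A3 : Matrix (Fin p) (Fin p) ℝ)
    (B1 : Matrix (Fin m) (Fin n) ℝ) (B2 : Matrix (Fin p) (Fin m) ℝ)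
    (S1 S2 : Matrix _ _ ℝ)
    (hS1 : S1 = A2 + B1 * A1⁻¹ * B1ᵀ)
    (hS2 : S2 = A3 + B2 * S1⁻¹ * B2ᵀ)
    (hA1 : IsUnit A1.det) (hS1u : IsUnit S1.det) (hS2u : IsUnit S2.det)
    (𝒜 PU : Matrix ((Fin n ⊕ Fin m) ⊕ Fin p) ((Fin n ⊕ Fin m) ⊕ Fin p) ℝ)
    (h𝒜 : 𝒜 = Matrix.fromBlocks (Matrix.fromBlocks A1 B1ᵀ B1 (-A2))
      (Matrix.fromRows 0 B2ᵀ) (Matrix.fromCols 0 B2) A3)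
    (hPU : PU = Matrix.fromBlocks (Matrix.fromBlocks A1 B1ᵀ 0 (-S1))
      (Matrix.fromRows 0 B2ᵀ) 0 S2) :
    𝒜 * PU⁻¹ = Matrix.fromBlocks (Matrix.fromBlocks 1 0 (B1 * A1⁻¹) 1)
      0 (Matrix.fromCols 0 (-(B2 * S1⁻¹))) 1
    ∧ ∀ (μ : ℝ) (x : (Fin n ⊕ Fin m) ⊕ Fin p → ℝ), x ≠ 0 →
        (PU⁻¹ * 𝒜).mulVec x = μ • x → μ = 1 := by
  have hPUdet : IsUnit PU.det := by
    rw [hPU, det_fromBlocks_zero₂₁, det_fromBlocks_zero₂₁, det_neg]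
    exact (hA1.mul ((isUnit_one.neg.pow _).mul hS1u)).mul hS2u
  have hAPU : 𝒜 * PU⁻¹ = fromBlocks (fromBlocks 1 0 (B1 * A1⁻¹) 1)
      0 (fromCols 0 (-(B2 * S1⁻¹))) 1 := by
    rw [h𝒜, doubleSaddlePoint_eq_mul A1 A2 A3 B1 B2 hS1 hS2 hA1 hS1u, ← hPU,
      mul_nonsing_inv_cancel_right _ _ hPUdet]
  have hchar := charpoly_fromBlocks_unitriangular (B1 * A1⁻¹) (fromCols 0 (-(B2 * S1⁻¹)))
  rw [← hAPU, charpoly_mul_comm] at hchar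
  exact ⟨hAPU, fun μ x hx hμ => eq_one_of_charpoly_eq_X_sub_one_pow hchar hx hμ⟩
end
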